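/- (Proposition 3 of the paper: Riemannian gradient descent is the same in both models — the exponential maps commute with the isometry.) Let E = EuclideanSpace ℝ (Fin n), let x ∈ E with ‖x‖ < 1, and let v ∈ E with v ≠ 0. Set λ := 2/(1 - ‖x‖²), N := λ * ‖v‖, y := φ(x) = (y₀, yᵣ), and w := Dφ_y(v). Then ψ(Real.cosh N • y + (Real.sinh N / N) • w) = x ⊕ ((Real.tanh (N/2)/‖v‖) • v). (The left side is ψ applied to the Lorentz exponential map exp_y of the tangent vector Dφ_y(v), whose Lorentz norm is N = λ‖v‖; the right side is the Poincaré exponential map exp_x(v). Applying this with v = −η·∇_{𝔻ⁿ}f(x) gives ψ(exp_y(−η∇_{𝕃ⁿ}g(y))) = exp_x(−η∇_{𝔻ⁿ}f(x)).) -/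

import Mathlib

open RealInnerProductSpace

/-- The transition map from the Poincaré ball to the Lorentz model. -/
noncomputable def phi {n : ℕ} (x : EuclideanSpace ℝ (Fin n)) : ℝ × EuclideanSpace ℝ (Fin n) :=
  ((1 + ‖x‖ ^ 2) / (1 - ‖x‖ ^ 2), (2 / (1 - ‖x‖ ^ 2)) • x)

/-- The transition map from the Lorentz model to the Poincaré ball. -/
noncomputable def psi {n : ℕ} (y : ℝ × EuclideanSpace ℝ (Fin n)) : EuclideanSpace ℝ (Fin n) :=
  (1 / (1 + y.1)) • y.2

/-- The differential at `y = φ(x)` of the transition map `φ` from the Poincaré ball to the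
Lorentz model, applied to a tangent vector `v`. -/
noncomputable def Dphi {n : ℕ} (y : ℝ × EuclideanSpace ℝ (Fin n))
    (v : EuclideanSpace ℝ (Fin n)) : ℝ × EuclideanSpace ℝ (Fin n) :=
  (⟪y.2, v⟫ * (1 + y.1), (1 + y.1) • v + ⟪y.2, v⟫ • y.2)

/-- Möbius addition on the unit ball. -/
noncomputable def mobius {n : ℕ} (x u : EuclideanSpace ℝ (Fin n)) : EuclideanSpace ℝ (Fin n) :=
  (1 / (1 + 2 * ⟪x, u⟫ + ‖x‖ ^ 2 * ‖u‖ ^ 2)) •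
    ((1 + 2 * ⟪x, u⟫ + ‖u‖ ^ 2) • x + (1 - ‖x‖ ^ 2) • u)

/-!
With `t = tanh (N / 2)` the half-angle formulas make `cosh N` and `sinh N` rational in `t`, and
since `Dphi (phi x)` is linear, the Lorentz point `cosh N • φ x + (sinh N / N) • Dφ v` becomes
`((1 + t²) / (1 - t²)) • φ x + ((1 - ‖x‖²) / (1 - t²)) • Dφ u` for `u = (t / ‖v‖) • v`, a vector
of norm `t < 1`. Applying `ψ` to that point is a rational identity in `‖x‖²`, `‖u‖²` and `⟪x, u⟫`,
whose value is the Möbius sum `x ⊕ u`.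
-/

namespace Real

theorem cosh_eq_tanh_half (z : ℝ) :
    cosh z = (1 + tanh (z / 2) ^ 2) / (1 - tanh (z / 2) ^ 2) := by
  have hc := (cosh_pos (z / 2)).ne'
  have hcs := cosh_sq_sub_sinh_sq (z / 2)
  rw [tanh_eq_sinh_div_cosh]
  conv_lhs => rw [← mul_div_cancel₀ z two_ne_zero, cosh_two_mul]
  field_simp
  rw [hcs]

theorem sinh_eq_tanh_half (z : ℝ) :
    sinh z = 2 * tanh (z / 2) / (1 - tanh (z / 2) ^ 2) := by
  have hc := (cosh_pos (z / 2)).ne'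
  have hcs := cosh_sq_sub_sinh_sq (z / 2)
  rw [tanh_eq_sinh_div_cosh]
  conv_lhs => rw [← mul_div_cancel₀ z two_ne_zero, sinh_two_mul]
  field_simp
  rw [hcs]
  ring

end Real

theorem Dphi_smul {n : ℕ} (y : ℝ × EuclideanSpace ℝ (Fin n)) (c : ℝ)
    (v : EuclideanSpace ℝ (Fin n)) : Dphi y (c • v) = c • Dphi y v := by
  ext <;> simp only [Dphi, inner_smul_right, smul_add, smul_smul, Prod.smul_fst, Prod.smul_snd,
    smul_eq_mul, PiLp.add_apply, PiLp.smul_apply] <;> ring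

theorem mobius_denom_pos {n : ℕ} {x u : EuclideanSpace ℝ (Fin n)} (hx : ‖x‖ < 1) (hu : ‖u‖ < 1) :
    0 < 1 + 2 * ⟪x, u⟫ + ‖x‖ ^ 2 * ‖u‖ ^ 2 := by
  have hinner := neg_le_of_abs_le (abs_real_inner_le_norm x u)
  nlinarith [mul_lt_one_of_nonneg_of_lt_one_left (norm_nonneg x) hx hu.le,
    mul_nonneg (norm_nonneg x) (norm_nonneg u)]

theorem psi_smul_phi_add_smul_Dphi_eq_mobius {n : ℕ} {x u : EuclideanSpace ℝ (Fin n)}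
    (hx : ‖x‖ < 1) (hu : ‖u‖ < 1) :
    psi (((1 + ‖u‖ ^ 2) / (1 - ‖u‖ ^ 2)) • phi x +
      ((1 - ‖x‖ ^ 2) / (1 - ‖u‖ ^ 2)) • Dphi (phi x) u) = mobius x u := by
  have hD := (mobius_denom_pos hx hu).ne'
  have hx' : 1 - ‖x‖ ^ 2 ≠ 0 := by nlinarith [norm_nonneg x]
  have hu' : 1 - ‖u‖ ^ 2 ≠ 0 := by nlinarith [norm_nonneg u]
  have hden : 1 + (((1 + ‖u‖ ^ 2) / (1 - ‖u‖ ^ 2)) • phi x +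
      ((1 - ‖x‖ ^ 2) / (1 - ‖u‖ ^ 2)) • Dphi (phi x) u).1 =
      2 * (1 + 2 * ⟪x, u⟫ + ‖x‖ ^ 2 * ‖u‖ ^ 2) / ((1 - ‖u‖ ^ 2) * (1 - ‖x‖ ^ 2)) := by
    simp only [phi, Dphi, Prod.fst_add, Prod.smul_fst, smul_eq_mul, real_inner_smul_left]
    field_simp
    ring
  rw [psi, hden]
  simp only [phi, Dphi, mobius, Prod.snd_add, Prod.smul_snd, real_inner_smul_left]
  match_scalars <;> field_simp <;> ring

/-- Proposition 3: the Lorentz and Poincaré exponential maps commute with the isometry `ψ`. -/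
theorem exp_maps_commute (n : ℕ) (x v : EuclideanSpace ℝ (Fin n)) (hx : ‖x‖ < 1) (hv : v ≠ 0) :
    psi (Real.cosh (2 / (1 - ‖x‖ ^ 2) * ‖v‖) • phi x +
        (Real.sinh (2 / (1 - ‖x‖ ^ 2) * ‖v‖) / (2 / (1 - ‖x‖ ^ 2) * ‖v‖)) • Dphi (phi x) v) =
      mobius x ((Real.tanh (2 / (1 - ‖x‖ ^ 2) * ‖v‖ / 2) / ‖v‖) • v) := by
  set N := 2 / (1 - ‖x‖ ^ 2) * ‖v‖ with hN
  set t := Real.tanh (N / 2) with ht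
  have hu : ‖(t / ‖v‖) • v‖ = |t| := by
    rw [norm_smul, Real.norm_eq_abs, abs_div, abs_norm, div_mul_cancel₀ _ (norm_ne_zero_iff.mpr hv)]
  have hcosh : Real.cosh N = (1 + ‖(t / ‖v‖) • v‖ ^ 2) / (1 - ‖(t / ‖v‖) • v‖ ^ 2) := by
    rw [hu, sq_abs, Real.cosh_eq_tanh_half]
  have hsinh : (Real.sinh N / N) • Dphi (phi x) v =
      ((1 - ‖x‖ ^ 2) / (1 - ‖(t / ‖v‖) • v‖ ^ 2)) • Dphi (phi x) ((t / ‖v‖) • v) := by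
    rw [Dphi_smul, smul_smul, hu, sq_abs, Real.sinh_eq_tanh_half, ← ht, hN]
    congr 1
    field_simp
  rw [hcosh, hsinh]
  exact psi_smul_phi_add_smul_Dphi_eq_mobius hx (hu ▸ Real.abs_tanh_lt_one _)
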